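/- arXiv:2109.10481 — 2 statements merged into one kernel-verified Lean document; each statement's English description precedes it below -/
import Mathlib

section
/- Let Z_1,...,Z_d be independent with Z_j ~ Poisson(n p_j), and set Δ_j = 1/d − p_j. Then the variance of T_n = ∑_{j=1}^d [(Z_j − n/d)² − Z_j] equals ∑_{j=1}^d [2n²/d² + 2n²Δ_j² + 4n³Δ_j²/d − 4n³Δ_j³]. -/
/-- The Poisson probability mass function with (real) mean `μ`. -/
noncomputable def poissonPdf (μ : ℝ) (k : ℕ) : ℝ :=
  Real.exp (-μ) * μ ^ k / (Nat.factorial k)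

/-- The statistic `T_n(z) = ∑_j [(z_j − n/d)² − z_j]`. -/
noncomputable def chiSqStat (d : ℕ) (n : ℝ) (z : Fin d → ℕ) : ℝ :=
  ∑ j, (((z j : ℝ) - n / d) ^ 2 - (z j : ℝ))

/-!
The coordinates are independent, so `T_n` has variance `∑_j Var[(Z_j − n/d)² − Z_j]`. Each
summand follows from the factorial moments `E[Z (Z-1) ⋯ (Z-r+1)] = μ^r` of `Z ~ Poisson(μ)`:
with `a = n/d`, the mean of `(Z − a)² − Z` is `(μ − a)²` and its variance is
`2μ² + 4μ(μ − a)²`. Substituting `μ = n p_j = n/d − nΔ_j` gives the stated summand up to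
`−4n²Δ_j/d`, and these extra terms cancel because `∑_j Δ_j = 0`.
-/

open Finset

theorem hasSum_fin_pi_prod {β : Type*} {d : ℕ} {f : Fin d → β → ℝ} {s : Fin d → ℝ}
    (hf : ∀ i, HasSum (f i) (s i)) : HasSum (fun z : Fin d → β ↦ ∏ i, f i (z i)) (∏ i, s i) := by
  induction d with
  | zero => simp
  | succ d ih =>
    have hhead : Summable fun b ↦ ‖f 0 b‖ := summable_norm_iff.mpr (hf 0).summable
    have htail : Summable fun w : Fin d → β ↦ ‖∏ i, f i.succ (w i)‖ := by
      simpa only [Real.norm_eq_abs, abs_prod] using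
        (ih (fun i ↦ ((hf i.succ).summable.abs).hasSum)).summable
    have hsum : Summable fun x : β × (Fin d → β) ↦ f 0 x.1 * ∏ i, f i.succ (x.2 i) := by
      apply summable_mul_of_summable_norm hhead htail
    have hprod := HasSum.mul (hf 0) (ih fun i ↦ hf i.succ) hsum
    rw [← (Fin.consEquiv fun _ ↦ β).hasSum_iff, Fin.prod_univ_succ]
    simpa [Function.comp_def, Fin.consEquiv, Fin.prod_univ_succ] using hprod

theorem hasSum_pi_prod {ι β : Type*} [Fintype ι] {f : ι → β → ℝ} {s : ι → ℝ}
    (hf : ∀ i, HasSum (f i) (s i)) : HasSum (fun z : ι → β ↦ ∏ i, f i (z i)) (∏ i, s i) := by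
  let e := Fintype.equivFin ι
  rw [← (e.arrowCongr (Equiv.refl β)).symm.hasSum_iff, ← e.symm.prod_comp]
  convert hasSum_fin_pi_prod (fun i ↦ hf (e.symm i)) using 2 with w
  simpa using (e.symm.prod_comp fun i ↦ f i (w (e i))).symm

section Independent

variable {ι β : Type*} [Fintype ι] {q : ι → β → ℝ}

theorem hasSum_prod_mul_prod (hq : ∀ i, HasSum (q i) 1) (S : Finset ι) {h : ι → β → ℝ}
    {c : ι → ℝ} (hh : ∀ i ∈ S, HasSum (fun k ↦ q i k * h i k) (c i)) :
    HasSum (fun z : ι → β ↦ (∏ i, q i (z i)) * ∏ i ∈ S, h i (z i)) (∏ i ∈ S, c i) := by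
  classical
  have := hasSum_pi_prod (f := fun i k ↦ q i k * if i ∈ S then h i k else 1)
    (s := fun i ↦ if i ∈ S then c i else 1) fun i ↦ by
      split_ifs with hi
      · exact hh i hi
      · simpa using hq i
  convert this using 1
  · funext z
    rw [prod_mul_distrib, prod_ite_mem, univ_inter]
  · rw [prod_ite_mem, univ_inter]

variable {g : ι → β → ℝ} {m : ι → ℝ}

theorem hasSum_prod_mul_sum (hq : ∀ i, HasSum (q i) 1)
    (hg : ∀ i, HasSum (fun k ↦ q i k * g i k) (m i)) :
    HasSum (fun z : ι → β ↦ (∏ i, q i (z i)) * ∑ i, g i (z i)) (∑ i, m i) := by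
  simp_rw [mul_sum]
  exact hasSum_sum fun i _ ↦ by simpa using hasSum_prod_mul_prod hq {i} (by simpa using hg i)

theorem hasSum_prod_mul_sum_sub_sq (hq : ∀ i, HasSum (q i) 1)
    (hg : ∀ i, HasSum (fun k ↦ q i k * g i k) (m i)) {v : ι → ℝ}
    (hv : ∀ i, HasSum (fun k ↦ q i k * (g i k - m i) ^ 2) (v i)) :
    HasSum (fun z : ι → β ↦ (∏ i, q i (z i)) * (∑ i, g i (z i) - ∑ i, m i) ^ 2) (∑ i, v i) := by
  classical
  have hcentered (i : ι) : HasSum (fun k ↦ q i k * (g i k - m i)) 0 := by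
    simpa only [mul_sub, one_mul, sub_self] using (hg i).sub ((hq i).mul_right (m i))
  have hterm (i j : ι) : HasSum (fun z : ι → β ↦
      (∏ l, q l (z l)) * ((g i (z i) - m i) * (g j (z j) - m j))) (if i = j then v i else 0) := by
    split_ifs with hij
    · subst hij
      convert hasSum_prod_mul_prod hq {i} (h := fun l k ↦ (g l k - m l) ^ 2) (c := v)
        fun l _ ↦ hv l using 1
      · funext z
        rw [prod_singleton, sq]
      · rw [prod_singleton]
    · convert hasSum_prod_mul_prod hq {i, j} (h := fun l k ↦ g l k - m l) (c := 0)
        (fun l _ ↦ hcentered l) using 1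
      · funext z
        rw [prod_pair hij]
      · rw [prod_pair hij, Pi.zero_apply, zero_mul]
  have := hasSum_sum (s := univ) fun i _ ↦ hasSum_sum (s := univ) fun j _ ↦ hterm i j
  simp only [sum_ite_eq, mem_univ, if_true] at this
  convert this using 2 with z
  rw [← sum_sub_distrib, sq, sum_mul_sum, mul_sum]
  simp only [mul_sum]

end Independent

theorem Nat.cast_descFactorial_eq_prod_range {R : Type*} [CommRing R] (k r : ℕ) :
    (k.descFactorial r : R) = ∏ i ∈ range r, ((k : R) - i) := by
  rw [← descPochhammer_eval_eq_descFactorial, descPochhammer_eval_eq_prod_range]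

theorem hasSum_poissonPdf (μ : ℝ) : HasSum (poissonPdf μ) 1 := by
  have := (NormedSpace.expSeries_div_hasSum_exp μ).mul_left (Real.exp (-μ))
  rw [← Real.exp_eq_exp_ℝ, ← Real.exp_add, neg_add_cancel, Real.exp_zero] at this
  exact (funext fun k ↦ mul_div_assoc _ _ _ : poissonPdf μ = _) ▸ this

theorem poissonPdf_add_mul_descFactorial (μ : ℝ) (j r : ℕ) :
    poissonPdf μ (j + r) * (j + r).descFactorial r = μ ^ r * poissonPdf μ j := by
  have h : ((j + r).factorial : ℝ) = j.factorial * (j + r).descFactorial r := by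
    have := Nat.factorial_mul_descFactorial (Nat.le_add_left r j)
    rw [Nat.add_sub_cancel] at this
    exact_mod_cast this.symm
  rw [poissonPdf, poissonPdf, h, pow_add]
  field_simp

theorem hasSum_poissonPdf_mul_descFactorial (μ : ℝ) (r : ℕ) :
    HasSum (fun k ↦ poissonPdf μ k * k.descFactorial r) (μ ^ r) := by
  rw [← (add_left_injective r).hasSum_iff]
  · simpa [Function.comp_def, poissonPdf_add_mul_descFactorial] using
      (hasSum_poissonPdf μ).mul_left (μ ^ r)
  · intro k hk
    rw [Nat.descFactorial_eq_zero_iff_lt.mpr, Nat.cast_zero, mul_zero]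
    by_contra! h
    exact hk ⟨k - r, Nat.sub_add_cancel h⟩

theorem hasSum_poissonPdf_mul_sum_descFactorial (μ : ℝ) {N : ℕ} (c : Fin N → ℝ) :
    HasSum (fun k ↦ poissonPdf μ k * ∑ r, c r * k.descFactorial r) (∑ r, c r * μ ^ (r : ℕ)) := by
  simp_rw [mul_sum, mul_left_comm (poissonPdf μ _)]
  exact hasSum_sum fun r _ ↦ (hasSum_poissonPdf_mul_descFactorial μ r).mul_left (c r)

theorem hasSum_poissonPdf_mul_sq_sub_sub (μ a : ℝ) :
    HasSum (fun k : ℕ ↦ poissonPdf μ k * (((k : ℝ) - a) ^ 2 - k)) ((μ - a) ^ 2) := by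
  convert hasSum_poissonPdf_mul_sum_descFactorial μ ![a ^ 2, -2 * a, 1] using 1
  · funext k
    simp only [Fin.sum_univ_three, Matrix.cons_val, Fin.coe_ofNat_eq_mod,
      Nat.cast_descFactorial_eq_prod_range, prod_range_succ, prod_range_zero]
    push_cast
    ring
  · simp only [Fin.sum_univ_three, Matrix.cons_val, Fin.coe_ofNat_eq_mod]
    ring

theorem hasSum_poissonPdf_mul_sq_sub_sub_sub_sq (μ a : ℝ) :
    HasSum (fun k : ℕ ↦ poissonPdf μ k * (((k : ℝ) - a) ^ 2 - k - (μ - a) ^ 2) ^ 2)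
      (2 * μ ^ 2 + 4 * μ * (μ - a) ^ 2) := by
  set b := a ^ 2 - (μ - a) ^ 2
  -- the coordinates of `((k - a) ^ 2 - k - (μ - a) ^ 2) ^ 2` in the basis `k.descFactorial r`
  convert hasSum_poissonPdf_mul_sum_descFactorial μ
    ![b ^ 2, 4 * a ^ 2 - 4 * a * b, 2 - 8 * a + 4 * a ^ 2 + 2 * b, 4 - 4 * a, 1] using 1
  · funext k
    simp only [Fin.sum_univ_five, Matrix.cons_val, Fin.coe_ofNat_eq_mod,
      Nat.cast_descFactorial_eq_prod_range, prod_range_succ, prod_range_zero, b]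
    push_cast
    ring
  · simp only [Fin.sum_univ_five, Matrix.cons_val, Fin.coe_ofNat_eq_mod, b]
    ring

theorem stmt_5_general (d : ℕ) (hd : 0 < d) (n : ℝ)
    (p : Fin d → ℝ) (hp1 : ∑ j, p j = 1) :
    (∑' z : Fin d → ℕ, (∏ j, poissonPdf (n * p j) (z j)) *
        (chiSqStat d n z -
          ∑' w : Fin d → ℕ, (∏ j, poissonPdf (n * p j) (w j)) * chiSqStat d n w) ^ 2)
      = ∑ j, (2 * n ^ 2 / d ^ 2 + 2 * n ^ 2 * (1 / d - p j) ^ 2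
          + 4 * n ^ 3 * (1 / d - p j) ^ 2 / d - 4 * n ^ 3 * (1 / d - p j) ^ 3) := by
  have hq (j : Fin d) := hasSum_poissonPdf (n * p j)
  have hmean (j : Fin d) := hasSum_poissonPdf_mul_sq_sub_sub (n * p j) (n / d)
  have hT : HasSum (fun w : Fin d → ℕ ↦ (∏ j, poissonPdf (n * p j) (w j)) * chiSqStat d n w)
      (∑ j, (n * p j - n / d) ^ 2) :=
    hasSum_prod_mul_sum (g := fun _ (k : ℕ) ↦ ((k : ℝ) - n / d) ^ 2 - k) hq hmean
  have hvar : HasSum (fun z : Fin d → ℕ ↦ (∏ j, poissonPdf (n * p j) (z j)) *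
      (chiSqStat d n z - ∑ j, (n * p j - n / d) ^ 2) ^ 2)
      (∑ j, (2 * (n * p j) ^ 2 + 4 * (n * p j) * (n * p j - n / d) ^ 2)) :=
    hasSum_prod_mul_sum_sub_sq (g := fun _ (k : ℕ) ↦ ((k : ℝ) - n / d) ^ 2 - k) hq hmean fun j ↦
      hasSum_poissonPdf_mul_sq_sub_sub_sub_sq (n * p j) (n / d)
  have hΔ : ∑ j, (1 / (d : ℝ) - p j) = 0 := by
    rw [sum_sub_distrib, hp1, sum_const, card_univ, Fintype.card_fin, nsmul_eq_mul,
      mul_one_div_cancel (by positivity), sub_self]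
  rw [hT.tsum_eq, hvar.tsum_eq, ← sub_eq_zero, ← sum_sub_distrib]
  calc _ = ∑ j, -(4 * n ^ 2 / d) * (1 / d - p j) := sum_congr rfl fun j _ ↦ by ring
    _ = 0 := by rw [← mul_sum, hΔ, mul_zero]

/-- For independent `Z_j ~ Poisson(n p_j)` and `Δ_j = 1/d − p_j`, the
variance of `T_n = ∑_j [(Z_j − n/d)² − Z_j]` (computed under the joint law, i.e. the
product of the Poisson laws) equals `∑_j [2n²/d² + 2n²Δ_j² + 4n³Δ_j²/d − 4n³Δ_j³]`. -/
theorem stmt_5 (d : ℕ) (hd : 0 < d) (n : ℝ) (hn : 0 < n)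
    (p : Fin d → ℝ) (hp0 : ∀ j, 0 ≤ p j) (hp1 : ∑ j, p j = 1) :
    (∑' z : Fin d → ℕ, (∏ j, poissonPdf (n * p j) (z j)) *
        (chiSqStat d n z -
          ∑' w : Fin d → ℕ, (∏ j, poissonPdf (n * p j) (w j)) * chiSqStat d n w) ^ 2)
      = ∑ j, (2 * n ^ 2 / d ^ 2 + 2 * n ^ 2 * (1 / d - p j) ^ 2
          + 4 * n ^ 3 * (1 / d - p j) ^ 2 / d - 4 * n ^ 3 * (1 / d - p j) ^ 3) :=
  stmt_5_general d hd n p hp1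
end

section
/- Fix r > 0 and for j ∈ [d] let β_j = √(1/(d p_j))·(√r + ε̄_j) and γ_j = √r + ε̄_j, where ε̄_j ≥ 0 and p_j > 0 satisfy sup_j |d p_j − 1| = O(√(d log d / n)). If n ≫ d log³ d as d → ∞, then sup_{j∈[d]} |Φ̄(β_j √(2 log d)) / Φ̄(γ_j √(2 log d)) − 1| → 0, where Φ̄ is the standard normal upper tail. -/
open Filter

/-- The standard normal density `φ`. -/
noncomputable def stdGaussianPdf (x : ℝ) : ℝ :=
  Real.exp (-x ^ 2 / 2) / Real.sqrt (2 * Real.pi)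

/-- The standard normal upper tail `Φ̄(x) = ∫_x^∞ φ(t) dt`. -/
noncomputable def normalTail (x : ℝ) : ℝ :=
  ∫ t in Set.Ioi x, stdGaussianPdf t

/-!
For `b ≥ 1` the Mills-type lower bound `Φ̄(b) ≥ e⁻² φ(b) / b` and the mean value bound
`|Φ̄(a) - Φ̄(b)| ≤ |a - b| φ(b) e^{|a² - b²|/2}` give
`|Φ̄(a) / Φ̄(b) - 1| ≤ |a - b| b e^{2 + |a² - b²|/2}`.
For `b = γ_j √(2 log d)` and `a = b / √(d p_j)` both `|a - b| b` and `|a² - b²|` are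
`O(|d p_j - 1| log d) = O(√(d log³ d / n))`, which tends to `0` uniformly in `j`.
-/

open MeasureTheory Set Real Topology

lemma stdGaussianPdf_pos (x : ℝ) : 0 < stdGaussianPdf x := by
  unfold stdGaussianPdf
  positivity

lemma integrable_stdGaussianPdf : Integrable stdGaussianPdf := by
  refine ((integrable_exp_neg_mul_sq one_half_pos).div_const √(2 * π)).congr
    (.of_forall fun x => ?_)
  simp only [stdGaussianPdf]
  ring_nf

lemma stdGaussianPdf_eq_mul_exp (a b : ℝ) :
    stdGaussianPdf a = stdGaussianPdf b * exp ((b ^ 2 - a ^ 2) / 2) := by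
  simp only [stdGaussianPdf, div_mul_eq_mul_div, ← exp_add]
  ring_nf

lemma stdGaussianPdf_antitoneOn : AntitoneOn stdGaussianPdf (Ici 0) := by
  intro x hx y _ hxy
  unfold stdGaussianPdf
  gcongr

lemma normalTail_nonneg (x : ℝ) : 0 ≤ normalTail x :=
  setIntegral_nonneg measurableSet_Ioi fun t _ => (stdGaussianPdf_pos t).le

lemma normalTail_sub_normalTail (a b : ℝ) :
    normalTail a - normalTail b = ∫ t in a..b, stdGaussianPdf t :=
  intervalIntegral.integral_Ioi_sub_Ioi' integrable_stdGaussianPdf.integrableOn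
    integrable_stdGaussianPdf.integrableOn

lemma abs_normalTail_sub_le {a b : ℝ} (ha : 0 ≤ a) (hb : 0 ≤ b) :
    |normalTail a - normalTail b| ≤
      stdGaussianPdf b * exp (|a ^ 2 - b ^ 2| / 2) * |b - a| := by
  rw [normalTail_sub_normalTail, ← Real.norm_eq_abs]
  refine intervalIntegral.norm_integral_le_of_norm_le_const fun x hx => ?_
  have hφ := stdGaussianPdf_pos b
  rw [Real.norm_eq_abs, abs_of_pos (stdGaussianPdf_pos x), stdGaussianPdf_eq_mul_exp x b]
  gcongr
  rw [uIoc, mem_Ioc] at hx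
  rcases le_total a b with hab | hab
  · rw [min_eq_left hab] at hx
    nlinarith [hx.1, le_abs_self (b ^ 2 - a ^ 2), abs_sub_comm (a ^ 2) (b ^ 2)]
  · rw [min_eq_right hab] at hx
    nlinarith [hx.1, abs_nonneg (a ^ 2 - b ^ 2)]

lemma exp_neg_two_mul_stdGaussianPdf_div_le_normalTail {x : ℝ} (hx : 1 ≤ x) :
    exp (-2) * stdGaussianPdf x / x ≤ normalTail x := by
  have hx0 : 0 < x := by linarith
  have hpdf : exp (-2) * stdGaussianPdf x ≤ stdGaussianPdf (x + x⁻¹) := by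
    have := stdGaussianPdf_pos x
    rw [stdGaussianPdf_eq_mul_exp (x + x⁻¹) x, mul_comm]
    gcongr
    have : x⁻¹ ^ 2 ≤ 1 := pow_le_one₀ (by positivity) (inv_le_one_of_one_le₀ hx)
    field_simp
    nlinarith
  calc exp (-2) * stdGaussianPdf x / x ≤ (x + x⁻¹ - x) * stdGaussianPdf (x + x⁻¹) := by
        rw [add_sub_cancel_left, div_eq_inv_mul]
        gcongr
    _ = ∫ _ in x..x + x⁻¹, stdGaussianPdf (x + x⁻¹) := by simp
    _ ≤ ∫ t in x..x + x⁻¹, stdGaussianPdf t :=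
        intervalIntegral.integral_mono_on (by simp; positivity) intervalIntegrable_const
          integrable_stdGaussianPdf.intervalIntegrable
          fun t ht => stdGaussianPdf_antitoneOn (mem_Ici.mpr (hx0.le.trans ht.1))
            (mem_Ici.mpr (by positivity)) ht.2
    _ ≤ normalTail x := by
        rw [← normalTail_sub_normalTail]
        linarith [normalTail_nonneg (x + x⁻¹)]

lemma abs_normalTail_div_sub_one_le {a b : ℝ} (ha : 0 ≤ a) (hb : 1 ≤ b) :
    |normalTail a / normalTail b - 1| ≤ |a - b| * b * exp (2 + |a ^ 2 - b ^ 2| / 2) := by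
  have hlow := exp_neg_two_mul_stdGaussianPdf_div_le_normalTail hb
  have hφ := stdGaussianPdf_pos b
  have hpos : 0 < normalTail b := lt_of_lt_of_le (by positivity) hlow
  rw [div_sub_one hpos.ne', abs_div, abs_of_pos hpos, div_le_iff₀ hpos]
  calc |normalTail a - normalTail b|
      ≤ stdGaussianPdf b * exp (|a ^ 2 - b ^ 2| / 2) * |b - a| :=
        abs_normalTail_sub_le ha (by linarith)
    _ = |a - b| * b * exp (2 + |a ^ 2 - b ^ 2| / 2) * (exp (-2) * stdGaussianPdf b / b) := by
        rw [abs_sub_comm b a, exp_add]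
        field_simp
        rw [mul_assoc, ← exp_add]
        norm_num
    _ ≤ |a - b| * b * exp (2 + |a ^ 2 - b ^ 2| / 2) * normalTail b := by gcongr

lemma abs_sqrt_sub_one_le {y : ℝ} (hy : 0 ≤ y) : |√y - 1| ≤ |y - 1| := by
  have hfac : y - 1 = (√y - 1) * (√y + 1) := by
    ring_nf
    rw [sq_sqrt hy]
  rw [hfac, abs_mul]
  exact le_mul_of_one_le_right (abs_nonneg _)
    (by rw [abs_of_pos (by positivity)]; linarith [sqrt_nonneg y])

lemma abs_inv_sub_one_le {x : ℝ} (hx : |x - 1| ≤ 1 / 2) : |x⁻¹ - 1| ≤ 2 * |x - 1| := by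
  have hx0 : 1 / 2 ≤ x := by linarith [(abs_le.mp hx).1]
  rw [show x⁻¹ - 1 = (1 - x) / x by field_simp, abs_div, abs_of_pos (show 0 < x by linarith),
    abs_sub_comm, div_le_iff₀ (show 0 < x by linarith)]
  nlinarith [abs_nonneg (x - 1)]

lemma abs_normalTail_sqrt_inv_mul_div_sub_one_le {x b : ℝ} (hx : |x - 1| ≤ 1 / 2)
    (hb : 1 ≤ b) :
    |normalTail (√(1 / x) * b) / normalTail b - 1| ≤
      2 * |x - 1| * b ^ 2 * exp (2 + 2 * |x - 1| * b ^ 2) := by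
  have hinv : |1 / x - 1| ≤ 2 * |x - 1| := by rw [one_div]; exact abs_inv_sub_one_le hx
  have hx0 : 0 ≤ 1 / x := one_div_nonneg.mpr (by linarith [(abs_le.mp hx).1])
  have hb0 : 0 < b := by linarith
  have hsq : |(√(1 / x) * b) ^ 2 - b ^ 2| = |1 / x - 1| * b ^ 2 := by
    rw [mul_pow, sq_sqrt hx0, ← sub_one_mul, abs_mul, abs_of_nonneg (sq_nonneg b)]
  calc |normalTail (√(1 / x) * b) / normalTail b - 1|
      ≤ |√(1 / x) * b - b| * b * exp (2 + |(√(1 / x) * b) ^ 2 - b ^ 2| / 2) :=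
        abs_normalTail_div_sub_one_le (by positivity) hb
    _ = |√(1 / x) - 1| * b ^ 2 * exp (2 + |1 / x - 1| * b ^ 2 / 2) := by
        rw [hsq, show √(1 / x) * b - b = (√(1 / x) - 1) * b by ring, abs_mul, abs_of_pos hb0]
        ring
    _ ≤ 2 * |x - 1| * b ^ 2 * exp (2 + 2 * |x - 1| * b ^ 2) := by
        have hs := (abs_sqrt_sub_one_le hx0).trans hinv
        gcongr
        nlinarith [abs_nonneg (1 / x - 1), sq_nonneg b]

lemma abs_normalTail_ratio_sub_one_le {r γ L x η : ℝ} (hγr : √r ≤ γ) (hγ1 : γ ≤ √r + 1)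
    (hL : 1 ≤ L) (hrL : 1 ≤ L * (2 * r)) (hx : |x - 1| ≤ η) (hηL : η * L ≤ 1 / 2) :
    |normalTail (√(1 / x) * γ * √(2 * L)) / normalTail (γ * √(2 * L)) - 1| ≤
      4 * (√r + 1) ^ 2 * (η * L) * exp (2 + 4 * (√r + 1) ^ 2 * (η * L)) := by
  have hγ0 : 0 ≤ γ := (sqrt_nonneg r).trans hγr
  have hη : 0 ≤ η := (abs_nonneg _).trans hx
  have hb2 : (γ * √(2 * L)) ^ 2 = 2 * γ ^ 2 * L := by
    rw [mul_pow, sq_sqrt (by linarith)]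
    ring
  have hb : 1 ≤ γ * √(2 * L) := by
    have hr : r ≤ γ ^ 2 := by
      have := sq_sqrt (show 0 ≤ r by nlinarith)
      nlinarith [sqrt_nonneg r]
    have : 1 ≤ (γ * √(2 * L)) ^ 2 := by rw [hb2]; nlinarith
    nlinarith [mul_nonneg hγ0 (sqrt_nonneg (2 * L))]
  have hx' : |x - 1| ≤ 1 / 2 := by nlinarith
  have hw : 2 * |x - 1| * (γ * √(2 * L)) ^ 2 ≤ 4 * (√r + 1) ^ 2 * (η * L) :=
    calc 2 * |x - 1| * (γ * √(2 * L)) ^ 2 = 4 * γ ^ 2 * (|x - 1| * L) := by rw [hb2]; ring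
      _ ≤ 4 * (√r + 1) ^ 2 * (η * L) := by gcongr
  rw [mul_assoc]
  refine (abs_normalTail_sqrt_inv_mul_div_sub_one_le hx' hb).trans ?_
  gcongr

lemma tendsto_const_mul_sqrt_mul_log_pow_div {n : ℕ → ℝ} (C : ℝ)
    (hn : Tendsto (fun d : ℕ => n d / ((d : ℝ) * log d ^ 3)) atTop atTop) :
    Tendsto (fun d : ℕ => C * √((d : ℝ) * log d ^ 3 / n d)) atTop (𝓝 0) := by
  have h := tendsto_inv_atTop_zero.comp hn
  simp only [Function.comp_def, inv_div] at h
  simpa using ((continuous_sqrt.tendsto 0).comp h).const_mul C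

theorem stmt_11_general (r : ℝ) (hr : 0 < r) (n : ℕ → ℝ)
    (p : (d : ℕ) → Fin d → ℝ) (εb : (d : ℕ) → Fin d → ℝ)
    (hεb0 : ∀ d j, 0 ≤ εb d j) (hεb1 : ∀ d j, εb d j ≤ 1)
    (C : ℝ)
    (hC : ∀ d : ℕ, ∀ j : Fin d,
      |(d : ℝ) * p d j - 1| ≤ C * Real.sqrt ((d : ℝ) * Real.log d / n d))
    (hn : Tendsto (fun d : ℕ => n d / ((d : ℝ) * (Real.log d) ^ 3)) atTop atTop) :
    ∀ δ > (0 : ℝ), ∀ᶠ d : ℕ in atTop, ∀ j : Fin d,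
      |normalTail (Real.sqrt (1 / ((d : ℝ) * p d j)) * (Real.sqrt r + εb d j) *
            Real.sqrt (2 * Real.log d)) /
          normalTail ((Real.sqrt r + εb d j) * Real.sqrt (2 * Real.log d)) - 1| < δ := by
  intro δ hδ
  have hU := tendsto_const_mul_sqrt_mul_log_pow_div C hn
  have hW : Tendsto (fun d : ℕ => 4 * (√r + 1) ^ 2 * (C * √((d : ℝ) * log d ^ 3 / n d)) *
      exp (2 + 4 * (√r + 1) ^ 2 * (C * √((d : ℝ) * log d ^ 3 / n d)))) atTop (𝓝 0) := by
    have hV := hU.const_mul (4 * (√r + 1) ^ 2)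
    simpa using hV.mul (hV.const_add 2).rexp
  have hlog : Tendsto (fun d : ℕ => log d) atTop atTop :=
    tendsto_log_atTop.comp tendsto_natCast_atTop_atTop
  filter_upwards [hW.eventually (gt_mem_nhds hδ), hU.eventually (ge_mem_nhds one_half_pos),
    hlog.eventually_ge_atTop 1, hlog.eventually_ge_atTop (1 / (2 * r))]
    with d hWδ hU2 hL1 hLr j
  have hηL : C * √((d : ℝ) * log d / n d) * log d = C * √((d : ℝ) * log d ^ 3 / n d) := by
    rw [mul_assoc, show (d : ℝ) * log d ^ 3 / n d = d * log d / n d * log d ^ 2 by ring,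
      sqrt_mul' _ (sq_nonneg _), sqrt_sq (by linarith)]
  refine (abs_normalTail_ratio_sub_one_le (le_add_of_nonneg_right (hεb0 d j))
    (by linarith [hεb1 d j]) hL1 ((div_le_iff₀ (by positivity)).mp hLr) (hC d j)
    (hηL ▸ hU2)).trans_lt ?_
  rwa [hηL]

/-- With `β_j = √(1/(d p_j))(√r + ε̄_j)`, `γ_j = √r + ε̄_j`,
`0 ≤ ε̄_j ≤ 1`, `sup_j |d p_j − 1| = O(√(d log d / n))`, and `n ≫ d log³ d`, the ratio
`Φ̄(β_j √(2 log d)) / Φ̄(γ_j √(2 log d))` tends to 1 uniformly in `j ∈ [d]`. -/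
theorem stmt_11 (r : ℝ) (hr : 0 < r) (n : ℕ → ℝ)
    (p : (d : ℕ) → Fin d → ℝ) (εb : (d : ℕ) → Fin d → ℝ)
    (hp : ∀ d j, 0 < p d j) (hεb0 : ∀ d j, 0 ≤ εb d j) (hεb1 : ∀ d j, εb d j ≤ 1)
    (C : ℝ)
    (hC : ∀ d : ℕ, ∀ j : Fin d,
      |(d : ℝ) * p d j - 1| ≤ C * Real.sqrt ((d : ℝ) * Real.log d / n d))
    (hn : Tendsto (fun d : ℕ => n d / ((d : ℝ) * (Real.log d) ^ 3)) atTop atTop) :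
    ∀ δ > (0 : ℝ), ∀ᶠ d : ℕ in atTop, ∀ j : Fin d,
      |normalTail (Real.sqrt (1 / ((d : ℝ) * p d j)) * (Real.sqrt r + εb d j) *
            Real.sqrt (2 * Real.log d)) /
          normalTail ((Real.sqrt r + εb d j) * Real.sqrt (2 * Real.log d)) - 1| < δ :=
  stmt_11_general r hr n p εb hεb0 hεb1 C hC hn
end
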